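/- arXiv:1710.05304 — 2 statements merged into one kernel-verified Lean document; each statement's English description precedes it below -/
import Mathlib

section
/- Let H be a Hilbert space and H₁, H₂ closed subspaces with orthogonal projections P₁, P₂, and let P denote the orthogonal projection onto H₁ ∩ H₂. Then the operator norms ‖P₂P₁ − P‖ and ‖P₁P₂ − P‖ are equal, and both equal the infimum of all κ ≥ 0 such that |⟨x₁, x₂⟩| ≤ κ‖x₁‖‖x₂‖ for all x₁ ∈ H₁ ∩ (H₁ ∩ H₂)^⊥ and x₂ ∈ H₂ ∩ (H₁ ∩ H₂)^⊥. -/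
/-!
Write `M = H₁ ⊓ H₂` and `Kᵢ = Hᵢ ⊓ Mᗮ`. Since `M ≤ Hᵢ`, the differences `Qᵢ = Pᵢ - P` are the
orthogonal projections onto `Kᵢ`, and `P₂P₁ - P = Q₂Q₁`. For orthogonal projections onto any two
subspaces, `‖Q₂Q₁‖` is the least `κ` with `‖⟪x₁, x₂⟫‖ ≤ κ‖x₁‖‖x₂‖` on `K₁ × K₂`: one inequality is
Cauchy–Schwarz applied to `⟪x₁, x₂⟫ = ⟪Q₂Q₁x₁, x₂⟫`, the other comes from
`‖Q₂Q₁x‖² = ‖⟪Q₁x, Q₂Q₁x⟫‖ ≤ κ‖x‖‖Q₂Q₁x‖`. This bound is symmetric in `K₁` and `K₂`, whence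
`‖P₂P₁ - P‖ = ‖P₁P₂ - P‖`.
-/

open scoped InnerProductSpace

section

variable {𝕜 E : Type*} [RCLike 𝕜] [NormedAddCommGroup E] [InnerProductSpace 𝕜 E]

/-- `Q` is an orthogonal projection onto `K`, given as data: unlike `Submodule.starProjection`,
this needs neither completeness of `K` nor of `E`. -/
def IsOrthogonalProjection (K : Submodule 𝕜 E) (Q : E →L[𝕜] E) : Prop :=
  ∀ x, Q x ∈ K ∧ ∀ y ∈ K, ⟪x - Q x, y⟫_𝕜 = 0

/-- Dixmier's cosine of the angle between `K₁` and `K₂`. The `θ(H₁, H₂)` of the statement is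
`dixmierCos (H₁ ⊓ (H₁ ⊓ H₂)ᗮ) (H₂ ⊓ (H₁ ⊓ H₂)ᗮ)`. -/
noncomputable def dixmierCos (K₁ K₂ : Submodule 𝕜 E) : ℝ :=
  sInf {κ : ℝ | 0 ≤ κ ∧ ∀ x₁ ∈ K₁, ∀ x₂ ∈ K₂, ‖⟪x₁, x₂⟫_𝕜‖ ≤ κ * (‖x₁‖ * ‖x₂‖)}

theorem dixmierCos_comm (K₁ K₂ : Submodule 𝕜 E) : dixmierCos K₁ K₂ = dixmierCos K₂ K₁ := by
  unfold dixmierCos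
  congr 1
  ext κ
  refine and_congr_right fun _ => ⟨fun h x₂ hx₂ x₁ hx₁ => ?_, fun h x₁ hx₁ x₂ hx₂ => ?_⟩
  · rw [norm_inner_symm, mul_comm ‖x₂‖]
    exact h x₁ hx₁ x₂ hx₂
  · rw [norm_inner_symm, mul_comm ‖x₁‖]
    exact h x₂ hx₂ x₁ hx₁

namespace IsOrthogonalProjection

variable {K M : Submodule 𝕜 E} {Q R : E →L[𝕜] E}

theorem mem (h : IsOrthogonalProjection K Q) (x : E) : Q x ∈ K :=
  (h x).1

theorem apply_of_mem (h : IsOrthogonalProjection K Q) {x : E} (hx : x ∈ K) : Q x = x := by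
  have h0 : ⟪x - Q x, x - Q x⟫_𝕜 = 0 := (h x).2 _ (K.sub_mem hx (h.mem x))
  exact (sub_eq_zero.mp (inner_self_eq_zero.mp h0)).symm

theorem inner_apply_right (h : IsOrthogonalProjection K Q) (x y : E) :
    ⟪x, Q y⟫_𝕜 = ⟪Q x, Q y⟫_𝕜 := by
  rw [← sub_eq_zero, ← inner_sub_left]
  exact (h x).2 _ (h.mem y)

theorem inner_apply_left (h : IsOrthogonalProjection K Q) (x y : E) :
    ⟪Q x, y⟫_𝕜 = ⟪x, Q y⟫_𝕜 := by
  rw [h.inner_apply_right x y, ← inner_conj_symm, h.inner_apply_right y x, inner_conj_symm]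

theorem norm_inner_apply_self (h : IsOrthogonalProjection K Q) (x : E) :
    ‖⟪x, Q x⟫_𝕜‖ = ‖Q x‖ ^ 2 := by
  rw [h.inner_apply_right, inner_self_eq_norm_sq_to_K, norm_pow, RCLike.norm_ofReal, abs_norm]

theorem norm_apply_le (h : IsOrthogonalProjection K Q) (x : E) : ‖Q x‖ ≤ ‖x‖ := by
  have hsq : ‖Q x‖ ^ 2 ≤ ‖x‖ * ‖Q x‖ := h.norm_inner_apply_self x ▸ norm_inner_le_norm x (Q x)
  nlinarith [norm_nonneg (Q x), norm_nonneg x]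

theorem apply_apply_of_le (hM : IsOrthogonalProjection M Q) (hK : IsOrthogonalProjection K R)
    (hle : M ≤ K) (x : E) : Q (R x) = Q x :=
  ext_inner_right 𝕜 fun y => by
    rw [hM.inner_apply_left, hK.inner_apply_left, hK.apply_of_mem (hle (hM.mem y)),
      hM.inner_apply_left]

theorem sub (hM : IsOrthogonalProjection M Q) (hK : IsOrthogonalProjection K R) (hle : M ≤ K) :
    IsOrthogonalProjection (K ⊓ Mᗮ) (R - Q) := by
  intro x
  refine ⟨⟨K.sub_mem (hK.mem x) (hle (hM.mem x)), fun u hu => ?_⟩, fun y hy => ?_⟩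
  · rw [sub_apply, inner_sub_right, ← hK.inner_apply_left,
      ← hM.inner_apply_left, hK.apply_of_mem (hle hu), hM.apply_of_mem hu, sub_self]
  · have hPy : ⟪Q x, y⟫_𝕜 = 0 := Submodule.inner_right_of_mem_orthogonal (hM.mem x) hy.2
    rw [sub_apply, sub_sub_eq_add_sub, add_sub_right_comm, inner_add_left,
      (hK x).2 y hy.1, hPy, add_zero]

end IsOrthogonalProjection

variable {K₁ K₂ : Submodule 𝕜 E} {Q₁ Q₂ : E →L[𝕜] E}

theorem IsOrthogonalProjection.comp_sub_eq {M : Submodule 𝕜 E} {Q : E →L[𝕜] E}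
    (h₁ : IsOrthogonalProjection K₁ Q₁) (h₂ : IsOrthogonalProjection K₂ Q₂)
    (h : IsOrthogonalProjection M Q) (hM₁ : M ≤ K₁) (hM₂ : M ≤ K₂) :
    Q₂.comp Q₁ - Q = (Q₂ - Q).comp (Q₁ - Q) := by
  ext x
  simp only [sub_apply, ContinuousLinearMap.comp_apply, map_sub,
    h₂.apply_of_mem (hM₂ (h.mem x)), h.apply_apply_of_le h₁ hM₁, h.apply_of_mem (h.mem x)]
  abel

theorem norm_inner_le_norm_comp_mul (h₁ : IsOrthogonalProjection K₁ Q₁)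
    (h₂ : IsOrthogonalProjection K₂ Q₂) {x₁ x₂ : E} (hx₁ : x₁ ∈ K₁) (hx₂ : x₂ ∈ K₂) :
    ‖⟪x₁, x₂⟫_𝕜‖ ≤ ‖Q₂.comp Q₁‖ * (‖x₁‖ * ‖x₂‖) :=
  calc ‖⟪x₁, x₂⟫_𝕜‖ = ‖⟪Q₂.comp Q₁ x₁, x₂⟫_𝕜‖ := by
        rw [ContinuousLinearMap.comp_apply, h₁.apply_of_mem hx₁, h₂.inner_apply_left,
          h₂.apply_of_mem hx₂]
    _ ≤ ‖Q₂.comp Q₁ x₁‖ * ‖x₂‖ := norm_inner_le_norm _ _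
    _ ≤ ‖Q₂.comp Q₁‖ * ‖x₁‖ * ‖x₂‖ := by gcongr; exact (Q₂.comp Q₁).le_opNorm x₁
    _ = ‖Q₂.comp Q₁‖ * (‖x₁‖ * ‖x₂‖) := mul_assoc _ _ _

theorem norm_comp_le_of_norm_inner_le (h₁ : IsOrthogonalProjection K₁ Q₁)
    (h₂ : IsOrthogonalProjection K₂ Q₂) {κ : ℝ} (hκ : 0 ≤ κ)
    (hbound : ∀ x₁ ∈ K₁, ∀ x₂ ∈ K₂, ‖⟪x₁, x₂⟫_𝕜‖ ≤ κ * (‖x₁‖ * ‖x₂‖)) :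
    ‖Q₂.comp Q₁‖ ≤ κ := by
  refine (Q₂.comp Q₁).opNorm_le_bound hκ fun x => ?_
  set t := ‖Q₂ (Q₁ x)‖
  have hsq : t ^ 2 ≤ κ * ‖x‖ * t :=
    calc t ^ 2 = ‖⟪Q₁ x, Q₂ (Q₁ x)⟫_𝕜‖ := (h₂.norm_inner_apply_self _).symm
      _ ≤ κ * (‖Q₁ x‖ * t) := hbound _ (h₁.mem x) _ (h₂.mem _)
      _ ≤ κ * (‖x‖ * t) := by gcongr; exact h₁.norm_apply_le x
      _ = κ * ‖x‖ * t := (mul_assoc _ _ _).symm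
  have ht : 0 ≤ t := norm_nonneg _
  have hκx : 0 ≤ κ * ‖x‖ := mul_nonneg hκ (norm_nonneg x)
  show t ≤ κ * ‖x‖
  nlinarith

theorem norm_comp_eq_dixmierCos (h₁ : IsOrthogonalProjection K₁ Q₁)
    (h₂ : IsOrthogonalProjection K₂ Q₂) : ‖Q₂.comp Q₁‖ = dixmierCos K₁ K₂ := by
  refine (IsLeast.csInf_eq ?_).symm
  refine ⟨⟨norm_nonneg _, fun _ hx₁ _ hx₂ => ?_⟩, fun _ hκ => ?_⟩
  · exact norm_inner_le_norm_comp_mul h₁ h₂ hx₁ hx₂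
  · exact norm_comp_le_of_norm_inner_le h₁ h₂ hκ.1 hκ.2

end

theorem stmt3_general (H : Type*) [NormedAddCommGroup H] [InnerProductSpace ℂ H]
    (H₁ H₂ : Submodule ℂ H)
    (P₁ P₂ P : H →L[ℂ] H)
    (hP₁ : ∀ x : H, P₁ x ∈ H₁ ∧ ∀ y ∈ H₁, ⟪x - P₁ x, y⟫_ℂ = 0)
    (hP₂ : ∀ x : H, P₂ x ∈ H₂ ∧ ∀ y ∈ H₂, ⟪x - P₂ x, y⟫_ℂ = 0)
    (hP : ∀ x : H, P x ∈ H₁ ⊓ H₂ ∧ ∀ y ∈ H₁ ⊓ H₂, ⟪x - P x, y⟫_ℂ = 0) :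
    ‖P₂.comp P₁ - P‖ = ‖P₁.comp P₂ - P‖ ∧
    ‖P₂.comp P₁ - P‖ =
      sInf {κ : ℝ | 0 ≤ κ ∧
        ∀ x₁ ∈ H₁ ⊓ (H₁ ⊓ H₂)ᗮ, ∀ x₂ ∈ H₂ ⊓ (H₁ ⊓ H₂)ᗮ,
          ‖⟪x₁, x₂⟫_ℂ‖ ≤ κ * (‖x₁‖ * ‖x₂‖)} := by
  have hQ₁ : IsOrthogonalProjection (H₁ ⊓ (H₁ ⊓ H₂)ᗮ) (P₁ - P) :=
    IsOrthogonalProjection.sub hP hP₁ inf_le_left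
  have hQ₂ : IsOrthogonalProjection (H₂ ⊓ (H₁ ⊓ H₂)ᗮ) (P₂ - P) :=
    IsOrthogonalProjection.sub hP hP₂ inf_le_right
  rw [IsOrthogonalProjection.comp_sub_eq hP₁ hP₂ hP inf_le_left inf_le_right,
    IsOrthogonalProjection.comp_sub_eq hP₂ hP₁ hP inf_le_right inf_le_left,
    norm_comp_eq_dixmierCos hQ₁ hQ₂, norm_comp_eq_dixmierCos hQ₂ hQ₁]
  exact ⟨dixmierCos_comm _ _, rfl⟩

/-- For closed subspaces `H₁, H₂` of a complex Hilbert space `H` with orthogonal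
projections `P₁, P₂`, and `P` the orthogonal projection onto `H₁ ∩ H₂`,
the operator norms `‖P₂P₁ − P‖` and `‖P₁P₂ − P‖` coincide and both are equal
to `θ(H₁,H₂) = inf{κ ≥ 0 : |⟪x₁,x₂⟫| ≤ κ‖x₁‖‖x₂‖ for all
x₁ ∈ H₁ ∩ (H₁∩H₂)ᗮ, x₂ ∈ H₂ ∩ (H₁∩H₂)ᗮ}`. -/
theorem stmt3 (H : Type*) [NormedAddCommGroup H] [InnerProductSpace ℂ H]
    [CompleteSpace H]
    (H₁ H₂ : Submodule ℂ H) (hc₁ : IsClosed (H₁ : Set H)) (hc₂ : IsClosed (H₂ : Set H))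
    (P₁ P₂ P : H →L[ℂ] H)
    (hP₁ : ∀ x : H, P₁ x ∈ H₁ ∧ ∀ y ∈ H₁, ⟪x - P₁ x, y⟫_ℂ = 0)
    (hP₂ : ∀ x : H, P₂ x ∈ H₂ ∧ ∀ y ∈ H₂, ⟪x - P₂ x, y⟫_ℂ = 0)
    (hP : ∀ x : H, P x ∈ H₁ ⊓ H₂ ∧ ∀ y ∈ H₁ ⊓ H₂, ⟪x - P x, y⟫_ℂ = 0) :
    ‖P₂.comp P₁ - P‖ = ‖P₁.comp P₂ - P‖ ∧
    ‖P₂.comp P₁ - P‖ =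
      sInf {κ : ℝ | 0 ≤ κ ∧
        ∀ x₁ ∈ H₁ ⊓ (H₁ ⊓ H₂)ᗮ, ∀ x₂ ∈ H₂ ⊓ (H₁ ⊓ H₂)ᗮ,
          ‖⟪x₁, x₂⟫_ℂ‖ ≤ κ * (‖x₁‖ * ‖x₂‖)} :=
  stmt3_general H H₁ H₂ P₁ P₂ P hP₁ hP₂ hP
end

section
/- Let G be a finite group with subgroups K₀, K₁ generating G, let ρ be the right regular representation of G on ℓ²(G), and define k₀ = (1/|K₀|)∑_{g∈K₀} g, k₁ = (1/|K₁|)∑_{g∈K₁} g, k_G = (1/|G|)∑_{g∈G} g in ℂ[G]. Then ‖ρ(k₁k₀ − k_G)‖ = ‖ρ(k₁) restricted to ℓ²₀(G)_{K₀}‖, where ℓ²₀(G)_{K₀} is the space of functions φ : G → ℂ that are constant on left cosets of K₀ and satisfy ∑_{g∈G} φ(g) = 0. -/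
/-!
Since `k₁ k_G = k_G`, we have `ρ(k₁k₀ − k_G) = ρ(k₁) ρ(k₀ − k_G)`, and `ρ(k₀ − k_G)` is the
orthogonal projection onto `ℓ²₀(G)_{K₀}`: it maps into that space, and `φ − ρ(k₀ − k_G) φ` is
orthogonal to it because `ρ(k₀)` is self-adjoint and fixes functions constant on left cosets
of `K₀`. For any bounded `B` and orthogonal projection `P` onto a subspace `S`, the supremum of
`‖B P x‖` over the unit sphere is the supremum of `‖B x‖` over the unit sphere of `S`, since `P`
fixes `S` and does not increase norms.
-/

open Finset

theorem Submodule.sSup_norm_comp_starProjection {𝕜 E F : Type*} [RCLike 𝕜]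
    [NormedAddCommGroup E] [InnerProductSpace 𝕜 E] [NormedAddCommGroup F] [NormedSpace 𝕜 F]
    (K : Submodule 𝕜 E) [K.HasOrthogonalProjection] (B : E →L[𝕜] F) :
    sSup {r : ℝ | ∃ x : E, ‖x‖ = 1 ∧ r = ‖B (K.starProjection x)‖} =
      sSup {r : ℝ | ∃ x ∈ K, ‖x‖ = 1 ∧ r = ‖B x‖} := by
  have hbddS : BddAbove {r : ℝ | ∃ x ∈ K, ‖x‖ = 1 ∧ r = ‖B x‖} := by
    refine ⟨‖B‖, ?_⟩
    rintro _ ⟨x, -, hx, rfl⟩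
    simpa [hx] using B.le_opNorm x
  have hbddProj : BddAbove {r : ℝ | ∃ x : E, ‖x‖ = 1 ∧ r = ‖B (K.starProjection x)‖} := by
    refine ⟨‖B‖, ?_⟩
    rintro _ ⟨x, hx, rfl⟩
    calc ‖B (K.starProjection x)‖ ≤ ‖B‖ * ‖K.starProjection x‖ := B.le_opNorm _
      _ ≤ ‖B‖ * ‖x‖ := by gcongr; exact K.norm_starProjection_apply_le x
      _ = ‖B‖ := by rw [hx, mul_one]
  have hnonneg : 0 ≤ sSup {r : ℝ | ∃ x ∈ K, ‖x‖ = 1 ∧ r = ‖B x‖} :=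
    Real.sSup_nonneg (by rintro _ ⟨x, -, -, rfl⟩; positivity)
  apply le_antisymm
  · refine Real.sSup_le ?_ hnonneg
    rintro _ ⟨x, hx, rfl⟩
    set y := K.starProjection x
    rcases eq_or_ne y 0 with hy | hy
    · simpa [hy] using hnonneg
    have hmem : ‖B ((‖y‖⁻¹ : 𝕜) • y)‖ ∈ {r : ℝ | ∃ x ∈ K, ‖x‖ = 1 ∧ r = ‖B x‖} :=
      ⟨_, K.smul_mem _ (K.starProjection_apply_mem x), norm_smul_inv_norm hy, rfl⟩
    calc ‖B y‖ = ‖y‖ * ‖B ((‖y‖⁻¹ : 𝕜) • y)‖ := by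
          rw [map_smul, norm_smul, ← mul_assoc, norm_inv, RCLike.norm_ofReal, abs_norm,
            mul_inv_cancel₀ (norm_ne_zero_iff.mpr hy), one_mul]
      _ ≤ 1 * ‖B ((‖y‖⁻¹ : 𝕜) • y)‖ := by
          gcongr; exact hx ▸ K.norm_starProjection_apply_le x
      _ ≤ _ := by rw [one_mul]; exact le_csSup hbddS hmem
  · refine Real.sSup_le ?_ (Real.sSup_nonneg (by rintro _ ⟨x, -, rfl⟩; positivity))
    rintro _ ⟨x, hxK, hx, rfl⟩
    exact le_csSup hbddProj ⟨x, hx, by rw [K.starProjection_eq_self_iff.mpr hxK]⟩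

section RegularRepresentation

variable {G : Type*} [Group G] [Fintype G]

/-- The space `ℓ²₀(G)_K`. -/
def meanZeroCosetConst (K : Subgroup G) : Submodule ℂ (EuclideanSpace ℂ G) where
  carrier := {x | (∀ g₁ g₂ : G, (g₁ : G ⧸ K) = g₂ → x g₁ = x g₂) ∧ ∑ g, x g = 0}
  add_mem' := by
    rintro x y ⟨hx, hx'⟩ ⟨hy, hy'⟩
    refine ⟨fun g₁ g₂ h => ?_, ?_⟩
    · simp [hx g₁ g₂ h, hy g₁ g₂ h]
    · simp [sum_add_distrib, hx', hy']
  zero_mem' := by simp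
  smul_mem' := by
    rintro c x ⟨hx, hx'⟩
    refine ⟨fun g₁ g₂ h => ?_, ?_⟩
    · simp [hx g₁ g₂ h]
    · simp [← mul_sum, hx']

theorem mem_meanZeroCosetConst {K : Subgroup G} {x : EuclideanSpace ℂ G} :
    x ∈ meanZeroCosetConst K ↔
      (∀ g₁ g₂ : G, (g₁ : G ⧸ K) = g₂ → x g₁ = x g₂) ∧ ∑ g, x g = 0 :=
  Iff.rfl

/-- `ρ(k_K)`, with `ρ` the right regular representation. -/
noncomputable def rightAvg (K : Subgroup G) [Fintype K] :
    EuclideanSpace ℂ G →L[ℂ] EuclideanSpace ℂ G :=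
  LinearMap.toContinuousLinearMap
    { toFun x := WithLp.toLp 2 fun g => (Fintype.card K : ℂ)⁻¹ * ∑ a : K, x (g * a)
      map_add' x y := by ext; simp [sum_add_distrib, mul_add]
      map_smul' c x := by ext; simp [← mul_sum]; ring }

theorem rightAvg_apply (K : Subgroup G) [Fintype K] (x : EuclideanSpace ℂ G) (g : G) :
    rightAvg K x g = (Fintype.card K : ℂ)⁻¹ * ∑ a : K, x (g * a) :=
  rfl

theorem rightAvg_apply_eq_of_mk_eq {K : Subgroup G} [Fintype K] (x : EuclideanSpace ℂ G)
    {g₁ g₂ : G} (h : (g₁ : G ⧸ K) = g₂) : rightAvg K x g₁ = rightAvg K x g₂ := by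
  obtain ⟨k, rfl⟩ : ∃ k : K, g₂ = g₁ * k := ⟨⟨_, QuotientGroup.eq.mp h⟩, by simp⟩
  rw [rightAvg_apply, rightAvg_apply]
  congr 1
  exact (Fintype.sum_equiv (Equiv.mulLeft k) _ _ fun b => by simp [mul_assoc]).symm

theorem sum_rightAvg_apply (K : Subgroup G) [Fintype K] (x : EuclideanSpace ℂ G) :
    ∑ g, rightAvg K x g = ∑ g, x g := by
  have hK : (Fintype.card K : ℂ) ≠ 0 := by exact_mod_cast Fintype.card_ne_zero
  simp_rw [rightAvg_apply, ← mul_sum]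
  rw [sum_comm]
  have hshift (a : K) : ∑ g, x (g * a) = ∑ g, x g := Equiv.sum_comp (Equiv.mulRight (a : G)) _
  simp [hshift, hK]

theorem inner_rightAvg_of_mem {K : Subgroup G} [Fintype K] (x : EuclideanSpace ℂ G)
    {w : EuclideanSpace ℂ G} (hw : w ∈ meanZeroCosetConst K) :
    inner ℂ (rightAvg K x) w = inner ℂ x w := by
  have hK : (Fintype.card K : ℂ) ≠ 0 := by exact_mod_cast Fintype.card_ne_zero
  have hshift (a : K) :
      ∑ g, w g * (starRingEnd ℂ) (x (g * a)) = ∑ g, w g * (starRingEnd ℂ) (x g) :=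
    calc _ = ∑ g, w (g * a) * (starRingEnd ℂ) (x (g * a)) := sum_congr rfl fun g _ => by
          rw [hw.1 g (g * a) (QuotientGroup.mk_mul_of_mem g a.2).symm]
      _ = _ := Equiv.sum_comp (Equiv.mulRight (a : G)) fun g => w g * (starRingEnd ℂ) (x g)
  simp only [PiLp.inner_apply, RCLike.inner_apply, rightAvg_apply, map_mul, map_sum, map_inv₀,
    map_natCast, mul_sum, mul_left_comm (w _)]
  rw [sum_comm]
  simp [← mul_sum, hshift, hK]

theorem starProjection_meanZeroCosetConst (K : Subgroup G) [Fintype K]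
    (x : EuclideanSpace ℂ G) :
    (meanZeroCosetConst K).starProjection x =
      rightAvg K x - WithLp.toLp 2 fun _ => (Fintype.card G : ℂ)⁻¹ * ∑ h, x h := by
  have hG : (Fintype.card G : ℂ) ≠ 0 := by exact_mod_cast Fintype.card_ne_zero
  apply Submodule.eq_starProjection_of_mem_of_inner_eq_zero
  · refine ⟨fun g₁ g₂ h => ?_, ?_⟩
    · simp [rightAvg_apply_eq_of_mk_eq x h]
    · simp [sum_sub_distrib, sum_rightAvg_apply, hG]
  · intro w hw
    rw [sub_sub_eq_add_sub, add_sub_right_comm, inner_add_left, inner_sub_left,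
      inner_rightAvg_of_mem x hw, sub_self, zero_add]
    simp [PiLp.inner_apply, ← sum_mul, hw.2]

theorem rightAvg_starProjection_meanZeroCosetConst_apply (K₀ K₁ : Subgroup G) [Fintype K₀]
    [Fintype K₁] (x : EuclideanSpace ℂ G) (g : G) :
    rightAvg K₁ ((meanZeroCosetConst K₀).starProjection x) g =
      ((Fintype.card K₁ : ℂ) * (Fintype.card K₀ : ℂ))⁻¹ * (∑ a : K₁, ∑ b : K₀, x (g * a * b)) -
        (Fintype.card G : ℂ)⁻¹ * ∑ h : G, x (g * h) := by
  have hK₁ : (Fintype.card K₁ : ℂ) ≠ 0 := by exact_mod_cast Fintype.card_ne_zero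
  have hshift : ∑ h, x (g * h) = ∑ h, x h := Equiv.sum_comp (Equiv.mulLeft g) _
  simp [starProjection_meanZeroCosetConst, rightAvg_apply, hshift, mul_sum, hK₁]
  exact sum_congr rfl fun _ _ => sum_congr rfl fun _ _ => by ring

end RegularRepresentation

theorem stmt8_general (G : Type*) [Group G] [Fintype G] (K₀ K₁ : Subgroup G)
    [Fintype K₀] [Fintype K₁]
    -- the ℓ² norm on functions on G
    (n2 : (G → ℂ) → ℝ)
    (hn2 : ∀ φ : G → ℂ, n2 φ = Real.sqrt (∑ g : G, ‖φ g‖ ^ 2))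
    -- ρ(k₁ k₀ − k_G)
    (opA : (G → ℂ) → (G → ℂ))
    (hopA : ∀ (φ : G → ℂ) (x : G), opA φ x =
      ((Fintype.card K₁ : ℂ) * (Fintype.card K₀ : ℂ))⁻¹ *
          (∑ a : K₁, ∑ b : K₀, φ (x * a * b)) -
        (Fintype.card G : ℂ)⁻¹ * ∑ g : G, φ (x * g))
    -- ρ(k₁)
    (opB : (G → ℂ) → (G → ℂ))
    (hopB : ∀ (φ : G → ℂ) (x : G), opB φ x =
      (Fintype.card K₁ : ℂ)⁻¹ * ∑ a : K₁, φ (x * a)) :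
    sSup {r : ℝ | ∃ φ : G → ℂ, n2 φ = 1 ∧ r = n2 (opA φ)} =
      sSup {r : ℝ | ∃ φ : G → ℂ,
        (∀ g₁ g₂ : G, (g₁ : G ⧸ K₀) = (g₂ : G ⧸ K₀) → φ g₁ = φ g₂) ∧
        (∑ g : G, φ g = 0) ∧ n2 φ = 1 ∧ r = n2 (opB φ)} := by
  have hnorm (φ : G → ℂ) : n2 φ = ‖WithLp.toLp 2 φ‖ := by
    rw [hn2, EuclideanSpace.norm_eq]
  have hA (φ : G → ℂ) : WithLp.toLp 2 (opA φ) =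
      rightAvg K₁ ((meanZeroCosetConst K₀).starProjection (WithLp.toLp 2 φ)) := by
    ext x
    rw [rightAvg_starProjection_meanZeroCosetConst_apply]
    exact hopA φ x
  have hB (φ : G → ℂ) : WithLp.toLp 2 (opB φ) = rightAvg K₁ (WithLp.toLp 2 φ) := by
    ext x
    exact hopB φ x
  convert (meanZeroCosetConst K₀).sSup_norm_comp_starProjection (rightAvg K₁) using 2 <;> ext r
  · simp only [Set.mem_ofPred_eq, hnorm, hA, (WithLp.toLp_surjective 2).exists]
  · simp only [Set.mem_ofPred_eq, hnorm, hB, (WithLp.toLp_surjective 2).exists,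
      mem_meanZeroCosetConst, and_assoc]

/-- For a finite group `G` generated by subgroups `K₀, K₁`, with `ρ` the right
regular representation on `ℓ²(G)` and averaging elements `k₀, k₁, k_G`, the
operator norm of `ρ(k₁k₀ − k_G)` equals the operator norm of `ρ(k₁)` restricted
to `ℓ²₀(G)_{K₀}`, the space of functions constant on left cosets of `K₀` with
total sum zero. -/
theorem stmt8 (G : Type*) [Group G] [Fintype G] (K₀ K₁ : Subgroup G)
    [Fintype K₀] [Fintype K₁]
    (hgen : K₀ ⊔ K₁ = ⊤)
    -- the ℓ² norm on functions on G
    (n2 : (G → ℂ) → ℝ)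
    (hn2 : ∀ φ : G → ℂ, n2 φ = Real.sqrt (∑ g : G, ‖φ g‖ ^ 2))
    -- ρ(k₁ k₀ − k_G)
    (opA : (G → ℂ) → (G → ℂ))
    (hopA : ∀ (φ : G → ℂ) (x : G), opA φ x =
      ((Fintype.card K₁ : ℂ) * (Fintype.card K₀ : ℂ))⁻¹ *
          (∑ a : K₁, ∑ b : K₀, φ (x * a * b)) -
        (Fintype.card G : ℂ)⁻¹ * ∑ g : G, φ (x * g))
    -- ρ(k₁)
    (opB : (G → ℂ) → (G → ℂ))
    (hopB : ∀ (φ : G → ℂ) (x : G), opB φ x =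
      (Fintype.card K₁ : ℂ)⁻¹ * ∑ a : K₁, φ (x * a)) :
    sSup {r : ℝ | ∃ φ : G → ℂ, n2 φ = 1 ∧ r = n2 (opA φ)} =
      sSup {r : ℝ | ∃ φ : G → ℂ,
        (∀ g₁ g₂ : G, (g₁ : G ⧸ K₀) = (g₂ : G ⧸ K₀) → φ g₁ = φ g₂) ∧
        (∑ g : G, φ g = 0) ∧ n2 φ = 1 ∧ r = n2 (opB φ)} :=
  stmt8_general G K₀ K₁ n2 hn2 opA hopA opB hopB
end
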